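/- Under the sensitivity assumption (1/γ)·P(T=1|Y₀=1,D=1,X=x) ≤ P(T=1|Y₀=0,D=1,X=x) ≤ γ·P(T=1|Y₀=1,D=1,X=x) with γ ≥ 1, it holds that P(T=1|Y₀=1,D=1,X=x) ≥ P(T=1|D=1,X=x) / (P(Y₀=1|D=1,X=x) + γ(1 − P(Y₀=1|D=1,X=x))). -/

import Mathlib

/-! Split `B = {D = 1, X = x}` according to `Y₀`. By the law of total probability
`P(T | B) = p q₁ + (1 - p) q₀` with `p = P(Y₀ = 1 | B)` and `qᵢ = P(T | Y₀ = i, B)`, and the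
upper sensitivity bound `q₀ ≤ γ q₁` gives `p q₁ + (1 - p) q₀ ≤ (p + γ (1 - p)) q₁`, where the
factor `p + γ (1 - p)` is at least `1`. -/

open MeasureTheory

/-- Conditional probability `P(A | B) = P(A ∩ B) / P(B)` as a real number. -/
noncomputable def condP {Ω : Type*} [MeasurableSpace Ω] (μ : Measure Ω) (A B : Set Ω) : ℝ :=
  (μ (A ∩ B)).toReal / (μ B).toReal

open Set

section condP

variable {Ω : Type*} [MeasurableSpace Ω] {μ : Measure Ω}

lemma condP_nonneg (A B : Set Ω) : 0 ≤ condP μ A B :=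
  div_nonneg ENNReal.toReal_nonneg ENNReal.toReal_nonneg

variable [IsFiniteMeasure μ]

lemma condP_univ {B : Set Ω} (hB : μ B ≠ 0) : condP μ univ B = 1 := by
  rw [condP, univ_inter]
  exact div_self (ENNReal.toReal_ne_zero.2 ⟨hB, measure_ne_top μ B⟩)

lemma condP_union {A₀ A₁ B : Set Ω} (hd : Disjoint A₀ A₁) (hA₁ : MeasurableSet A₁)
    (hB : MeasurableSet B) : condP μ (A₀ ∪ A₁) B = condP μ A₀ B + condP μ A₁ B := by
  rw [condP, condP, condP, ← add_div, union_inter_distrib_right,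
    measure_union (hd.mono inter_subset_left inter_subset_left) (hA₁.inter hB),
    ENNReal.toReal_add (measure_ne_top μ _) (measure_ne_top μ _)]

lemma condP_inter_mul_condP (A S B : Set Ω) :
    condP μ A (S ∩ B) * condP μ S B = condP μ (A ∩ S) B := by
  rw [condP, condP, condP, inter_assoc]
  by_cases hSB : (μ (S ∩ B)).toReal = 0
  · have hASB : (μ (A ∩ (S ∩ B))).toReal = 0 := le_antisymm
      (hSB ▸ ENNReal.toReal_mono (measure_ne_top μ _) (measure_mono inter_subset_right))
      ENNReal.toReal_nonneg
    simp only [hSB, hASB, zero_div, zero_mul]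
  · rw [div_mul_div_cancel₀ hSB]

lemma condP_eq_add_of_union_eq_univ {A S₀ S₁ B : Set Ω} (hA : MeasurableSet A)
    (hS₁ : MeasurableSet S₁) (hB : MeasurableSet B) (hd : Disjoint S₀ S₁)
    (hcover : S₀ ∪ S₁ = univ) :
    condP μ A B = condP μ S₀ B * condP μ A (S₀ ∩ B) + condP μ S₁ B * condP μ A (S₁ ∩ B) := by
  rw [mul_comm, condP_inter_mul_condP, mul_comm, condP_inter_mul_condP,
    ← condP_union (hd.mono inter_subset_right inter_subset_right) (hA.inter hS₁) hB,
    ← inter_union_distrib_left, hcover, inter_univ]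

lemma condP_eq_one_sub_of_union_eq_univ {S₀ S₁ B : Set Ω} (hS₁ : MeasurableSet S₁)
    (hB : MeasurableSet B) (hB₀ : μ B ≠ 0) (hd : Disjoint S₀ S₁) (hcover : S₀ ∪ S₁ = univ) :
    condP μ S₀ B = 1 - condP μ S₁ B := by
  rw [← condP_univ hB₀, ← hcover, condP_union hd hS₁ hB, add_sub_cancel_right]

end condP

lemma mixture_div_le_of_le_mul {p q₀ q₁ γ : ℝ} (hp₁ : p ≤ 1) (hγ : 1 ≤ γ)
    (h : q₀ ≤ γ * q₁) : (p * q₁ + (1 - p) * q₀) / (p + γ * (1 - p)) ≤ q₁ := by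
  have hden : 1 ≤ p + γ * (1 - p) := by nlinarith
  rw [div_le_iff₀ (by linarith)]
  nlinarith [mul_le_mul_of_nonneg_left h (sub_nonneg.2 hp₁)]

theorem sensitivity_lower_bound_general
    {Ω ι : Type*} [MeasurableSpace Ω]
    (μ : Measure Ω) [IsProbabilityMeasure μ]
    (T Y0 D : Ω → ℕ) (X : Ω → ι) (x : ι) (γ : ℝ) (hγ : 1 ≤ γ)
    (hTm : Measurable T) (hY0m : Measurable Y0) (hDm : Measurable D)
    (hXx : MeasurableSet {ω | X ω = x})
    (hY0bin : ∀ ω, Y0 ω = 0 ∨ Y0 ω = 1)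
    (hpos : 0 < μ ({ω | D ω = 1} ∩ {ω | X ω = x}))
    (hsensU : condP μ {ω | T ω = 1} ({ω | Y0 ω = 0} ∩ ({ω | D ω = 1} ∩ {ω | X ω = x})) ≤
      γ * condP μ {ω | T ω = 1} ({ω | Y0 ω = 1} ∩ ({ω | D ω = 1} ∩ {ω | X ω = x}))) :
    condP μ {ω | T ω = 1} ({ω | D ω = 1} ∩ {ω | X ω = x}) /
        (condP μ {ω | Y0 ω = 1} ({ω | D ω = 1} ∩ {ω | X ω = x}) +
          γ * (1 - condP μ {ω | Y0 ω = 1} ({ω | D ω = 1} ∩ {ω | X ω = x}))) ≤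
      condP μ {ω | T ω = 1} ({ω | Y0 ω = 1} ∩ ({ω | D ω = 1} ∩ {ω | X ω = x})) := by
  set B := {ω | D ω = 1} ∩ {ω | X ω = x}
  have hT : MeasurableSet {ω | T ω = 1} := hTm (measurableSet_singleton 1)
  have hB : MeasurableSet B := (hDm (measurableSet_singleton 1)).inter hXx
  have hS₁ : MeasurableSet {ω | Y0 ω = 1} := hY0m (measurableSet_singleton 1)
  have hd : Disjoint {ω | Y0 ω = 0} {ω | Y0 ω = 1} :=
    disjoint_left.2 fun ω (h₀ : Y0 ω = 0) (h₁ : Y0 ω = 1) => by omega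
  have hcover : {ω | Y0 ω = 0} ∪ {ω | Y0 ω = 1} = univ := eq_univ_of_forall hY0bin
  have hY0₀ := condP_eq_one_sub_of_union_eq_univ hS₁ hB hpos.ne' hd hcover
  rw [condP_eq_add_of_union_eq_univ hT hS₁ hB hd hcover, hY0₀, add_comm]
  refine mixture_div_le_of_le_mul ?_ hγ hsensU
  linarith [condP_nonneg (μ := μ) {ω | Y0 ω = 0} B]

/-- Sensitivity-model lower bound: under
`(1/γ)·P(T=1|Y₀=1,D=1,X=x) ≤ P(T=1|Y₀=0,D=1,X=x) ≤ γ·P(T=1|Y₀=1,D=1,X=x)` with `γ ≥ 1`,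
`P(T=1|Y₀=1,D=1,X=x) ≥ P(T=1|D=1,X=x)/(P(Y₀=1|D=1,X=x) + γ(1 − P(Y₀=1|D=1,X=x)))`. -/
theorem sensitivity_lower_bound
    {Ω ι : Type*} [MeasurableSpace Ω]
    (μ : Measure Ω) [IsProbabilityMeasure μ]
    (T Y0 D : Ω → ℕ) (X : Ω → ι) (x : ι) (γ : ℝ) (hγ : 1 ≤ γ)
    (hTm : Measurable T) (hY0m : Measurable Y0) (hDm : Measurable D)
    (hXx : MeasurableSet {ω | X ω = x})
    (hY0bin : ∀ ω, Y0 ω = 0 ∨ Y0 ω = 1)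
    (hpos : 0 < μ ({ω | D ω = 1} ∩ {ω | X ω = x}))
    (hpos1 : 0 < μ ({ω | Y0 ω = 1} ∩ ({ω | D ω = 1} ∩ {ω | X ω = x})))
    (hpos0 : 0 < μ ({ω | Y0 ω = 0} ∩ ({ω | D ω = 1} ∩ {ω | X ω = x})))
    (hsensL : (1 / γ) *
        condP μ {ω | T ω = 1} ({ω | Y0 ω = 1} ∩ ({ω | D ω = 1} ∩ {ω | X ω = x})) ≤
      condP μ {ω | T ω = 1} ({ω | Y0 ω = 0} ∩ ({ω | D ω = 1} ∩ {ω | X ω = x})))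
    (hsensU : condP μ {ω | T ω = 1} ({ω | Y0 ω = 0} ∩ ({ω | D ω = 1} ∩ {ω | X ω = x})) ≤
      γ * condP μ {ω | T ω = 1} ({ω | Y0 ω = 1} ∩ ({ω | D ω = 1} ∩ {ω | X ω = x}))) :
    condP μ {ω | T ω = 1} ({ω | D ω = 1} ∩ {ω | X ω = x}) /
        (condP μ {ω | Y0 ω = 1} ({ω | D ω = 1} ∩ {ω | X ω = x}) +
          γ * (1 - condP μ {ω | Y0 ω = 1} ({ω | D ω = 1} ∩ {ω | X ω = x}))) ≤
      condP μ {ω | T ω = 1} ({ω | Y0 ω = 1} ∩ ({ω | D ω = 1} ∩ {ω | X ω = x})) :=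
  sensitivity_lower_bound_general μ T Y0 D X x γ hγ hTm hY0m hDm hXx hY0bin hpos hsensU
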